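/- arXiv:1407.6215 — 2 statements merged into one kernel-verified Lean document; each statement's English description precedes it below -/
import Mathlib

section
/- For every prime p and every positive integer n, there exists a finite p-group P of order p^{3n} such that CD(P) is a quasi-antichain of width p^n + 1 with P ∈ CD(P), and every atom of CD(P) is an abelian subgroup of order p^{2n} equal to its own centralizer in P. (Such a group is given by the group of 3 × 3 lower unitriangular matrices over the field with p^n elements.) -/
/-- The Chermak-Delgado measure of a subgroup `H` of a finite group `G`:
`m_G(H) = |H| · |C_G(H)|`. -/
noncomputable def CDmeasure {G : Type*} [Group G] (H : Subgroup G) : ℕ :=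
  Nat.card H * Nat.card (Subgroup.centralizer (H : Set G))

/-- `H` belongs to the Chermak-Delgado lattice of `G`: its measure is maximal. -/
def inCD {G : Type*} [Group G] (H : Subgroup G) : Prop :=
  ∀ K : Subgroup G, CDmeasure K ≤ CDmeasure H

/-- `P` is a finite `p`-group of order `p^(3n)` whose Chermak-Delgado lattice is
a quasi-antichain of width `p^n + 1` with `P ∈ CD(P)`, and every atom of `CD(P)`
is an abelian subgroup of order `p^(2n)` equal to its own centralizer in `P`. -/
def GoodUnitriangularCD (P : Type*) [Group P] [Finite P] (p n : ℕ) : Prop :=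
  Nat.card P = p ^ (3 * n) ∧
  inCD (⊤ : Subgroup P) ∧ inCD (Subgroup.center P) ∧
  (∀ K : Subgroup P, inCD K → Subgroup.center P ≤ K) ∧
  (∀ K K' : Subgroup P, inCD K → inCD K' →
    Subgroup.center P < K → K ≤ K' → K' < ⊤ → K = K') ∧
  {K : Subgroup P | inCD K ∧ Subgroup.center P < K ∧ K < ⊤}.ncard = p ^ n + 1 ∧
  (∀ K : Subgroup P, inCD K → Subgroup.center P < K → K < ⊤ →
    (∀ x y : K, x * y = y * x) ∧ Nat.card K = p ^ (2 * n) ∧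
      Subgroup.centralizer (K : Set P) = K)

/-- The Heisenberg group over a field `F`, as lower unitriangular 3×3 matrices,
recorded by the three below-diagonal entries. -/
@[ext]
structure Heis (F : Type) where
  a : F
  b : F
  c : F

namespace Heis

variable {F : Type} [Field F]

instance : Mul (Heis F) := ⟨fun x y => ⟨x.a + y.a, x.b + y.b, x.c + y.c + x.a * y.b⟩⟩
instance : One (Heis F) := ⟨⟨0, 0, 0⟩⟩
instance : Inv (Heis F) := ⟨fun x => ⟨-x.a, -x.b, -x.c + x.a * x.b⟩⟩

@[simp] lemma mul_a (x y : Heis F) : (x * y).a = x.a + y.a := rfl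
@[simp] lemma mul_b (x y : Heis F) : (x * y).b = x.b + y.b := rfl
@[simp] lemma mul_c (x y : Heis F) : (x * y).c = x.c + y.c + x.a * y.b := rfl
@[simp] lemma one_a : (1 : Heis F).a = 0 := rfl
@[simp] lemma one_b : (1 : Heis F).b = 0 := rfl
@[simp] lemma one_c : (1 : Heis F).c = 0 := rfl
@[simp] lemma inv_a (x : Heis F) : (x⁻¹).a = -x.a := rfl
@[simp] lemma inv_b (x : Heis F) : (x⁻¹).b = -x.b := rfl
@[simp] lemma inv_c (x : Heis F) : (x⁻¹).c = -x.c + x.a * x.b := rfl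

instance : Group (Heis F) where
  mul_assoc x y z := by ext <;> simp <;> ring
  one_mul x := by ext <;> simp
  mul_one x := by ext <;> simp
  inv_mul_cancel x := by ext <;> simp <;> ring

/-- The product equiv. -/
def equivProd : Heis F ≃ F × F × F where
  toFun x := (x.a, x.b, x.c)
  invFun t := ⟨t.1, t.2.1, t.2.2⟩
  left_inv x := rfl
  right_inv t := rfl

instance [Finite F] : Finite (Heis F) := Finite.of_equiv _ (equivProd (F := F)).symm

lemma mul_comm_iff {x y : Heis F} : x * y = y * x ↔ x.a * y.b = y.a * x.b := by
  constructor
  · intro h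
    have := congrArg Heis.c h
    simp at this
    linear_combination this
  · intro h
    ext <;> simp [add_comm]
    linear_combination h

lemma mem_center_iff' {x : Heis F} :
    x ∈ Subgroup.center (Heis F) ↔ x.a = 0 ∧ x.b = 0 := by
  rw [Subgroup.mem_center_iff]
  constructor
  · intro h
    constructor
    · have := mul_comm_iff.mp (h ⟨0, 1, 0⟩)
      simpa using this.symm
    · have := mul_comm_iff.mp (h ⟨1, 0, 0⟩)
      simpa using this
  · rintro ⟨ha, hb⟩ g
    rw [mul_comm_iff, ha, hb]
    ring

/-- The "line" subgroup: elements whose `(a,b)` part lies on the line `u·b' = a'·v`. -/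
def line (u v : F) : Subgroup (Heis F) where
  carrier := {y | u * y.b = y.a * v}
  one_mem' := by simp
  mul_mem' := by
    intro x y hx hy
    simp only [Set.mem_setOf_eq] at *
    simp only [mul_a, mul_b]
    linear_combination hx + hy
  inv_mem' := by
    intro x hx
    simp only [Set.mem_setOf_eq] at *
    simp only [inv_a, inv_b]
    linear_combination -hx

@[simp] lemma mem_line {u v : F} {y : Heis F} : y ∈ line u v ↔ u * y.b = y.a * v := Iff.rfl

lemma center_le_line (u v : F) : Subgroup.center (Heis F) ≤ line u v := by
  intro x hx
  obtain ⟨ha, hb⟩ := mem_center_iff'.mp hx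
  simp [ha, hb]

lemma cross_cancel {u v A B : F} (huv : ¬(u = 0 ∧ v = 0))
    (h1 : u * A = u * B) (h2 : v * A = v * B) : A = B := by
  rcases not_and_or.mp huv with h | h
  · exact mul_left_cancel₀ h h1
  · exact mul_left_cancel₀ h h2

lemma line_comm {u v : F} (huv : ¬(u = 0 ∧ v = 0)) {x y : Heis F}
    (hx : x ∈ line u v) (hy : y ∈ line u v) : x * y = y * x := by
  rw [mem_line] at hx hy
  rw [mul_comm_iff]
  refine cross_cancel huv ?_ ?_
  · linear_combination x.a * hy - y.a * hx
  · linear_combination x.b * hy - y.b * hx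

lemma line_smul {t u v : F} (ht : t ≠ 0) : line (t * u) (t * v) = line u v := by
  ext y
  simp only [mem_line]
  constructor
  · intro h
    exact mul_left_cancel₀ ht (by linear_combination h)
  · intro h
    linear_combination t * h

lemma centralizer_line {u v : F} (huv : ¬(u = 0 ∧ v = 0)) :
    Subgroup.centralizer ((line u v : Subgroup (Heis F)) : Set (Heis F)) = line u v := by
  apply le_antisymm
  · intro y hy
    have hm : (⟨u, v, 0⟩ : Heis F) ∈ line u v := by simp [mul_comm]
    have := Subgroup.mem_centralizer_iff.mp hy _ hm
    rw [mul_comm_iff] at this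
    simpa using this
  · intro y hy
    rw [Subgroup.mem_centralizer_iff]
    intro x hx
    exact line_comm huv hx hy

lemma centralizer_le_line {K : Subgroup (Heis F)} {x : Heis F} (hx : x ∈ K) :
    Subgroup.centralizer (K : Set (Heis F)) ≤ line x.a x.b := by
  intro y hy
  have := Subgroup.mem_centralizer_iff.mp hy x hx
  rw [mul_comm_iff] at this
  simpa using this

lemma centralizer_le_center {K : Subgroup (Heis F)} {x y : Heis F}
    (hx : x ∈ K) (hy : y ∈ K) (hne : x.a * y.b ≠ y.a * x.b) :
    Subgroup.centralizer (K : Set (Heis F)) ≤ Subgroup.center (Heis F) := by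
  intro z hz
  have hxz := mul_comm_iff.mp (Subgroup.mem_centralizer_iff.mp hz x hx)
  have hyz := mul_comm_iff.mp (Subgroup.mem_centralizer_iff.mp hz y hy)
  have hD : x.a * y.b - y.a * x.b ≠ 0 := sub_ne_zero_of_ne hne
  have hza : z.a = 0 := by
    have h0 : z.a * (x.a * y.b - y.a * x.b) = 0 := by
      linear_combination y.a * hxz - x.a * hyz
    rcases mul_eq_zero.mp h0 with h | h
    · exact h
    · exact absurd h hD
  have hzb : z.b = 0 := by
    rw [hza] at hxz hyz
    simp only [zero_mul] at hxz hyz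
    by_contra hb
    have ha0 : x.a = 0 := by
      rcases mul_eq_zero.mp hxz with h | h
      · exact h
      · exact absurd h hb
    have hb0 : y.a = 0 := by
      rcases mul_eq_zero.mp hyz with h | h
      · exact h
      · exact absurd h hb
    apply hne
    rw [ha0, hb0]
    ring
  exact mem_center_iff'.mpr ⟨hza, hzb⟩

lemma centralizer_of_le_center {K : Subgroup (Heis F)}
    (hK : K ≤ Subgroup.center (Heis F)) :
    Subgroup.centralizer (K : Set (Heis F)) = ⊤ := by
  rw [eq_top_iff]
  intro y _
  rw [Subgroup.mem_centralizer_iff]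
  intro x hx
  exact (Subgroup.mem_center_iff.mp (hK hx) y).symm

lemma centralizer_top :
    Subgroup.centralizer ((⊤ : Subgroup (Heis F)) : Set (Heis F))
      = Subgroup.center (Heis F) := by
  rw [Subgroup.coe_top, Subgroup.centralizer_univ]

section Counting

variable [Finite F]

lemma card_heis : Nat.card (Heis F) = Nat.card F ^ 3 := by
  rw [Nat.card_congr (equivProd (F := F)), Nat.card_prod, Nat.card_prod]
  ring

lemma card_center : Nat.card (Subgroup.center (Heis F)) = Nat.card F := by
  apply Nat.card_eq_of_bijective
    (fun z : Subgroup.center (Heis F) => (z : Heis F).c)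
  constructor
  · rintro ⟨z, hz⟩ ⟨w, hw⟩ h
    obtain ⟨hza, hzb⟩ := mem_center_iff'.mp hz
    obtain ⟨hwa, hwb⟩ := mem_center_iff'.mp hw
    simp only at h
    ext
    · rw [hza, hwa]
    · rw [hzb, hwb]
    · exact h
  · intro c
    exact ⟨⟨⟨0, 0, c⟩, mem_center_iff'.mpr ⟨rfl, rfl⟩⟩, rfl⟩

lemma card_line {u v : F} (huv : ¬(u = 0 ∧ v = 0)) :
    Nat.card (line u v : Subgroup (Heis F)) = Nat.card F ^ 2 := by
  have : Nat.card (F × F) = Nat.card F ^ 2 := by rw [Nat.card_prod]; ring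
  rw [← this]
  symm
  apply Nat.card_eq_of_bijective
    (fun t : F × F => (⟨⟨t.1 * u, t.1 * v, t.2⟩, by simp; ring⟩ : line u v))
  constructor
  · rintro ⟨t, c⟩ ⟨t', c'⟩ h
    simp only [Subtype.mk.injEq, Heis.mk.injEq] at h
    obtain ⟨h1, h2, h3⟩ := h
    have ht : t = t' := by
      rcases not_and_or.mp huv with hu | hv
      · exact mul_right_cancel₀ hu h1
      · exact mul_right_cancel₀ hv h2
    simp [ht, h3]
  · rintro ⟨y, hy⟩
    rw [mem_line] at hy
    by_cases hu : u = 0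
    · have hv : v ≠ 0 := fun hv => huv ⟨hu, hv⟩
      have hya : y.a = 0 := by
        rw [hu, zero_mul] at hy
        rcases mul_eq_zero.mp hy.symm with h | h
        · exact h
        · exact absurd h hv
      refine ⟨(y.b * v⁻¹, y.c), ?_⟩
      apply Subtype.ext
      ext
      · show y.b * v⁻¹ * u = y.a
        rw [hu, hya, mul_zero]
      · show y.b * v⁻¹ * v = y.b
        field_simp
      · rfl
    · refine ⟨(y.a * u⁻¹, y.c), ?_⟩
      apply Subtype.ext
      ext
      · show y.a * u⁻¹ * u = y.a
        field_simp
      · show y.a * u⁻¹ * v = y.b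
        field_simp
        linear_combination -hy
      · rfl

lemma one_lt_q : 1 < Nat.card F := Finite.one_lt_card

lemma q_pos : 0 < Nat.card F := zero_lt_one.trans one_lt_q

lemma card_pos (K : Subgroup (Heis F)) : 0 < Nat.card K := Nat.card_pos

lemma measure_top : CDmeasure (⊤ : Subgroup (Heis F)) = Nat.card F ^ 4 := by
  rw [CDmeasure, centralizer_top, Subgroup.card_top, card_heis, card_center]
  ring

lemma measure_center : CDmeasure (Subgroup.center (Heis F)) = Nat.card F ^ 4 := by
  rw [CDmeasure, centralizer_of_le_center le_rfl, Subgroup.card_top, card_heis,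
    card_center]
  ring

lemma measure_line {u v : F} (huv : ¬(u = 0 ∧ v = 0)) :
    CDmeasure (line u v : Subgroup (Heis F)) = Nat.card F ^ 4 := by
  rw [CDmeasure, centralizer_line huv, card_line huv]
  ring

lemma nat_helper {a b A B : ℕ} (ha : a ≤ A) (hb : b ≤ B) (h : A * B ≤ a * b)
    (hb0 : 0 < b) (hA0 : 0 < A) : a = A ∧ b = B := by
  have h1 : a * b ≤ A * b := Nat.mul_le_mul_right _ ha
  have h2 : A * b ≤ A * B := Nat.mul_le_mul_left _ hb
  have hab : a * b = A * b := le_antisymm h1 (le_trans h2 h)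
  have haA : a = A := Nat.eq_of_mul_eq_mul_right hb0 hab
  refine ⟨haA, ?_⟩
  have : A * b = A * B := le_antisymm h2 (le_trans h (by rw [hab]))
  exact Nat.eq_of_mul_eq_mul_left hA0 this

/-- The key structural lemma: the measure is at most `q⁴`, and in case of
equality the subgroup is the center, the whole group, or one of the lines. -/
lemma measure_le (K : Subgroup (Heis F)) :
    CDmeasure K ≤ Nat.card F ^ 4 ∧
      (CDmeasure K = Nat.card F ^ 4 →
        K = Subgroup.center (Heis F) ∨ K = ⊤ ∨
          ∃ u v : F, ¬(u = 0 ∧ v = 0) ∧ K = line u v) := by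
  have hq0 : 0 < Nat.card F := zero_lt_one.trans one_lt_q
  by_cases hab : ∀ x ∈ K, ∀ y ∈ K, x.a * y.b = y.a * x.b
  · by_cases hz : K ≤ Subgroup.center (Heis F)
    · -- central case
      have hc : Nat.card K ≤ (Nat.card F) := by
        rw [← card_center (F := F)]
        exact Subgroup.card_le_of_le hz
      have hC : Nat.card (Subgroup.centralizer (K : Set (Heis F))) = (Nat.card F) ^ 3 := by
        rw [centralizer_of_le_center hz, Subgroup.card_top, card_heis]
      constructor
      · rw [CDmeasure, hC]
        calc Nat.card K * (Nat.card F) ^ 3 ≤ (Nat.card F) * (Nat.card F) ^ 3 := Nat.mul_le_mul_right _ hc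
        _ = (Nat.card F) ^ 4 := by ring
      · intro hm
        left
        rw [CDmeasure, hC] at hm
        have hcard : Nat.card K = (Nat.card F) := by
          have : Nat.card K * (Nat.card F) ^ 3 = (Nat.card F) * (Nat.card F) ^ 3 := by rw [hm]; ring
          exact Nat.eq_of_mul_eq_mul_right (pow_pos hq0 _) this
        exact Subgroup.eq_of_le_of_card_ge hz (by rw [hcard, card_center])
    · -- abelian, non-central
      obtain ⟨x, hxK, hx⟩ := SetLike.not_le_iff_exists.mp hz
      have hxab : ¬(x.a = 0 ∧ x.b = 0) := fun h => hx (mem_center_iff'.mpr h)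
      have hKle : K ≤ line x.a x.b := by
        intro y hy
        rw [mem_line]
        exact hab x hxK y hy
      have hCle : Subgroup.centralizer (K : Set (Heis F)) ≤ line x.a x.b :=
        centralizer_le_line hxK
      have hcK : Nat.card K ≤ (Nat.card F) ^ 2 := by
        rw [← card_line hxab]
        exact Subgroup.card_le_of_le hKle
      have hcC : Nat.card (Subgroup.centralizer (K : Set (Heis F))) ≤ (Nat.card F) ^ 2 := by
        rw [← card_line hxab]
        exact Subgroup.card_le_of_le hCle
      constructor
      · rw [CDmeasure]
        calc Nat.card K * Nat.card (Subgroup.centralizer (K : Set (Heis F)))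
            ≤ (Nat.card F) ^ 2 * (Nat.card F) ^ 2 := Nat.mul_le_mul hcK hcC
        _ = (Nat.card F) ^ 4 := by ring
      · intro hm
        right; right
        refine ⟨x.a, x.b, hxab, ?_⟩
        rw [CDmeasure] at hm
        have := nat_helper hcK hcC (by rw [hm]; apply le_of_eq; ring)
          (card_pos _) (pow_pos hq0 _)
        exact Subgroup.eq_of_le_of_card_ge hKle (by rw [this.1, card_line hxab])
  · -- nonabelian case
    push_neg at hab
    obtain ⟨x, hxK, y, hyK, hne⟩ := hab
    have hCle : Subgroup.centralizer (K : Set (Heis F)) ≤ Subgroup.center (Heis F) :=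
      centralizer_le_center hxK hyK hne
    have hcC : Nat.card (Subgroup.centralizer (K : Set (Heis F))) ≤ (Nat.card F) := by
      rw [← card_center (F := F)]
      exact Subgroup.card_le_of_le hCle
    have hcK : Nat.card K ≤ (Nat.card F) ^ 3 := by
      rw [← card_heis (F := F), ← Subgroup.card_top (G := Heis F)]
      exact Subgroup.card_le_of_le le_top
    constructor
    · rw [CDmeasure]
      calc Nat.card K * Nat.card (Subgroup.centralizer (K : Set (Heis F)))
          ≤ (Nat.card F) ^ 3 * (Nat.card F) := Nat.mul_le_mul hcK hcC
      _ = (Nat.card F) ^ 4 := by ring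
    · intro hm
      right; left
      rw [CDmeasure] at hm
      have := nat_helper hcK hcC (by rw [hm]; apply le_of_eq; ring)
        (card_pos _) (pow_pos hq0 _)
      apply Subgroup.eq_top_of_card_eq
      rw [this.1, card_heis]

lemma inCD_iff (K : Subgroup (Heis F)) :
    inCD K ↔ CDmeasure K = Nat.card F ^ 4 := by
  constructor
  · intro h
    refine le_antisymm (measure_le K).1 ?_
    rw [← measure_top (F := F)]
    exact h ⊤
  · intro h K'
    rw [h]
    exact (measure_le K').1

lemma inCD_classify {K : Subgroup (Heis F)} (h : inCD K) :
    K = Subgroup.center (Heis F) ∨ K = ⊤ ∨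
      ∃ u v : F, ¬(u = 0 ∧ v = 0) ∧ K = line u v :=
  (measure_le K).2 ((inCD_iff K).mp h)

lemma line_inCD {u v : F} (huv : ¬(u = 0 ∧ v = 0)) :
    inCD (line u v : Subgroup (Heis F)) :=
  (inCD_iff _).mpr (measure_line huv)

lemma center_lt_line {u v : F} (huv : ¬(u = 0 ∧ v = 0)) :
    Subgroup.center (Heis F) < line u v := by
  refine lt_of_le_of_ne (center_le_line u v) (fun h => ?_)
  have : (⟨u, v, 0⟩ : Heis F) ∈ line u v := by simp [mul_comm]
  rw [← h] at this
  exact huv (mem_center_iff'.mp this)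

lemma line_lt_top {u v : F} (huv : ¬(u = 0 ∧ v = 0)) :
    (line u v : Subgroup (Heis F)) < ⊤ := by
  refine lt_top_iff_ne_top.mpr (fun h => ?_)
  have h1 : Nat.card (line u v : Subgroup (Heis F)) = Nat.card F ^ 2 := card_line huv
  rw [h, Subgroup.card_top, card_heis] at h1
  have := one_lt_q (F := F)
  nlinarith

lemma atoms_eq :
    {K : Subgroup (Heis F) | inCD K ∧ Subgroup.center (Heis F) < K ∧ K < ⊤}
      = insert (line 0 1) ((fun v : F => line 1 v) '' Set.univ) := by
  ext K
  simp only [Set.mem_setOf_eq, Set.mem_insert_iff, Set.mem_image, Set.mem_univ,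
    true_and]
  constructor
  · rintro ⟨hcd, hlt, htop⟩
    rcases inCD_classify hcd with h | h | ⟨u, v, huv, h⟩
    · exact absurd h.symm (ne_of_lt hlt)
    · exact absurd h (ne_of_lt htop)
    · by_cases hu : u = 0
      · left
        have hv : v ≠ 0 := fun hv => huv ⟨hu, hv⟩
        rw [h, hu]
        have := line_smul (u := 0) (v := 1) hv
        rw [mul_zero, mul_one] at this
        exact this
      · right
        refine ⟨u⁻¹ * v, ?_⟩
        have := line_smul (u := 1) (v := u⁻¹ * v) hu
        rw [mul_one] at this
        rw [← this, h]
        congr 1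
        field_simp
  · intro h
    have : ∃ u v : F, ¬(u = 0 ∧ v = 0) ∧ K = line u v := by
      rcases h with h | ⟨v, h⟩
      · exact ⟨0, 1, by simp, h⟩
      · exact ⟨1, v, by simp, h.symm⟩
    obtain ⟨u, v, huv, rfl⟩ := this
    exact ⟨line_inCD huv, center_lt_line huv, line_lt_top huv⟩

lemma atoms_ncard :
    {K : Subgroup (Heis F) | inCD K ∧ Subgroup.center (Heis F) < K ∧ K < ⊤}.ncard
      = Nat.card F + 1 := by
  rw [atoms_eq]
  have hinj : Function.Injective (fun v : F => (line 1 v : Subgroup (Heis F))) := by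
    intro v w h
    have h' : (line 1 v : Subgroup (Heis F)) = line 1 w := h
    have hv : (⟨1, v, 0⟩ : Heis F) ∈ line 1 v := by simp
    rw [h', mem_line] at hv
    simpa using hv
  have hnotmem : (line 0 1 : Subgroup (Heis F)) ∉
      (fun v : F => line 1 v) '' Set.univ := by
    rintro ⟨v, -, h⟩
    have h' : (line 1 v : Subgroup (Heis F)) = line 0 1 := h
    have hv : (⟨1, v, 0⟩ : Heis F) ∈ line 1 v := by simp
    rw [h', mem_line] at hv
    simpa using hv
  rw [Set.ncard_insert_of_notMem hnotmem (Set.finite_univ.image _),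
    Set.ncard_image_of_injective _ hinj, Set.ncard_univ]

end Counting

end Heis

/-- for every prime `p` and positive integer `n` there is a finite
`p`-group `P` of order `p^(3n)` such that `CD(P)` is a quasi-antichain of width
`p^n + 1` with `P ∈ CD(P)`, and every atom of `CD(P)` is an abelian subgroup of
order `p^(2n)` equal to its own centralizer in `P`. -/
theorem stmt17 (p n : ℕ) (hp : p.Prime) (hn : 0 < n) :
    ∃ (P : Type) (grp : Group P) (fin : Finite P),
      @IsPGroup p P grp ∧ @GoodUnitriangularCD P grp fin p n := by
  haveI := Fact.mk hp
  set F := GaloisField p n with hF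
  have hq : Nat.card F = p ^ n := GaloisField.card p n hn.ne'
  refine ⟨Heis F, inferInstance, inferInstance, ?_, ?_⟩
  · apply IsPGroup.of_card (n := 3 * n)
    rw [Heis.card_heis, hq, ← pow_mul, Nat.mul_comm]
  · refine ⟨?_, ?_, ?_, ?_, ?_, ?_, ?_⟩
    · rw [Heis.card_heis, hq, ← pow_mul, Nat.mul_comm]
    · exact (Heis.inCD_iff _).mpr Heis.measure_top
    · exact (Heis.inCD_iff _).mpr Heis.measure_center
    · intro K hK
      rcases Heis.inCD_classify hK with h | h | ⟨u, v, huv, h⟩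
      · rw [h]
      · rw [h]; exact le_top
      · rw [h]; exact Heis.center_le_line u v
    · intro K K' hK hK' hltK hle hltK'
      have hKne : K ≠ ⊤ := fun h => absurd (top_le_iff.mp (h ▸ hle)) (ne_of_lt hltK')
      rcases Heis.inCD_classify hK with h | h | ⟨u, v, huv, h⟩
      · exact absurd h.symm (ne_of_lt hltK)
      · exact absurd h hKne
      rcases Heis.inCD_classify hK' with h' | h' | ⟨u', v', huv', h'⟩
      · exact absurd (h' ▸ hle) (not_le_of_gt (h ▸ Heis.center_lt_line huv))
      · exact absurd h' (ne_of_lt hltK')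
      · apply Subgroup.eq_of_le_of_card_ge hle
        rw [h, h', Heis.card_line huv, Heis.card_line huv']
    · rw [Heis.atoms_ncard, hq]
    · intro K hK hlt htop
      rcases Heis.inCD_classify hK with h | h | ⟨u, v, huv, h⟩
      · exact absurd h.symm (ne_of_lt hlt)
      · exact absurd h (ne_of_lt htop)
      subst h
      refine ⟨?_, ?_, Heis.centralizer_line huv⟩
      · intro x y
        exact Subtype.ext (Heis.line_comm huv x.2 y.2)
      · rw [Heis.card_line huv, hq, ← pow_mul, Nat.mul_comm]
end

section
/- For every prime p there exists a finite group Y of order p^9 such that CD(Y) is a quasi-antichain of width p + 1 with Y ∈ CD(Y), where exactly one of the three atoms of CD(Y) is abelian if p = 2, and exactly two of the p + 1 atoms of CD(Y) are abelian if p is odd. -/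
/-- `Y` has order `p^9`, `CD(Y)` is a quasi-antichain of width `p + 1` with
`Y ∈ CD(Y)`, and the number of abelian atoms is 1 if `p = 2` and 2 if `p` is
odd. -/
def GoodCDwidthPplus1' (Y : Type*) [Group Y] [Finite Y] (p : ℕ) : Prop :=
  Nat.card Y = p ^ 9 ∧
  inCD (⊤ : Subgroup Y) ∧ inCD (Subgroup.center Y) ∧
  (∀ K : Subgroup Y, inCD K → Subgroup.center Y ≤ K) ∧
  (∀ K K' : Subgroup Y, inCD K → inCD K' →
    Subgroup.center Y < K → K ≤ K' → K' < ⊤ → K = K') ∧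
  {K : Subgroup Y | inCD K ∧ Subgroup.center Y < K ∧ K < ⊤}.ncard = p + 1 ∧
  (p = 2 → {K : Subgroup Y | inCD K ∧ Subgroup.center Y < K ∧ K < ⊤ ∧
    ∀ x y : K, x * y = y * x}.ncard = 1) ∧
  (Odd p → {K : Subgroup Y | inCD K ∧ Subgroup.center Y < K ∧ K < ⊤ ∧
    ∀ x y : K, x * y = y * x}.ncard = 2)

/-!
Take `K = 𝔽_{p^3}`, `V = K × K`, and on `V × K` the product
`(v, z) (v', z') = (v + v', z + z' + twist v v')` with
`twist u v = u₁ v₁^p - u₂ v₂^p`. Two elements commute iff `commForm v v' = 0`, where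
`commForm u v = twist u v - twist v u`, so the centre is `0 × K` and every subgroup containing it
is the preimage of an additive subgroup `U ≤ V`, with centraliser the preimage of the
`commForm`-orthogonal `U^⊥`. Its measure is `|U| |U^⊥| p^6`, and a subgroup not containing the
centre has strictly smaller measure than its product with the centre.

The whole proof is the inequality `|U| |U^⊥| ≤ p^6` on the `𝔽_p`-space `V` of dimension 6, with
equality only for `0`, `V` and the `p + 1` lines `K w`, `w ∈ 𝔽_p² \ 0`. The form is only
`𝔽_p`-bilinear, and its Frobenius twist is what forces the counting: the orthogonal of one nonzero
vector has order at most `p^4`; the orthogonal of two `K`-independent vectors consists of the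
`𝔽_p`-combinations of at most two vectors, so has order at most `p^2`; and if `U` lies in a line
`K w` but not in `𝔽_p w`, then `U^⊥` lies in a `K`-line, and is `0` unless `w` is rational.
Applying this both to `U` and to `U^⊥ ≤ V` (using `U ≤ U^⊥⊥`) leaves only
`|U| = |U^⊥| = p^3` with `U` a rational line. On `K w` the form is
`commForm (a w) (b w) = (a b^p - a^p b) twist w w`, so the line `K (n, 1)` is abelian iff `n² = 1`
and `K (1, 0)` is not.
-/

open Polynomial

noncomputable section

namespace ChermakDelgadoExample

lemma ncard_setOf_mul_pow_eq_le {F : Type*} [Field F] {q : ℕ} (hq : 1 < q) {a : F} (ha : a ≠ 0)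
    (b : F) : {x : F | a * x ^ q = b * x}.ncard ≤ q := by
  classical
  set f : F[X] := C a * X ^ q - C b * X
  have hf : f ≠ 0 := fun h0 => ha <| by
    simpa [f, coeff_X, hq.ne] using congrArg (coeff · q) h0
  have hdeg : f.natDegree ≤ q :=
    (natDegree_sub_le _ _).trans <| max_le
      ((natDegree_C_mul_le _ _).trans (natDegree_X_pow q).le)
      ((natDegree_C_mul_le _ _).trans (natDegree_X_le.trans hq.le))
  calc {x : F | a * x ^ q = b * x}.ncard
      ≤ (f.roots.toFinset : Set F).ncard := Set.ncard_le_ncard (fun x hx => by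
          simpa [f, mem_roots hf, sub_eq_zero] using hx) (Set.toFinite _)
    _ ≤ Multiset.card f.roots := by
        rw [Set.ncard_coe_finset]; exact Multiset.toFinset_card_le _
    _ ≤ q := (card_roots' f).trans hdeg

abbrev K (p : ℕ) [Fact p.Prime] := GaloisField p 3

variable {p : ℕ} [Fact p.Prime]

lemma card_K : Nat.card (K p) = p ^ 3 := GaloisField.card p 3 (by norm_num)

lemma pow_pow_pow_eq_self (a : K p) : ((a ^ p) ^ p) ^ p = a := by
  let := Fintype.ofFinite (K p)
  have : Fintype.card (K p) = p ^ 3 := by rw [Fintype.card_eq_nat_card, card_K]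
  rw [← pow_mul, ← pow_mul, show p * (p * p) = Fintype.card (K p) by rw [this]; ring,
    FiniteField.pow_card]

lemma mem_bot_iff (c : K p) : c ∈ (⊥ : Subfield (K p)) ↔ c ^ p = c :=
  Subfield.mem_bot_iff_pow_eq_self _ _

lemma ncard_bot : ((⊥ : Subfield (K p)) : Set (K p)).ncard = p := by
  rw [← Nat.card_coe_set_eq]; exact Subfield.card_bot _ _

lemma exists_pow_ne_self : ∃ τ : K p, τ ^ p ≠ τ := by
  by_contra! h
  have hbot : ((⊥ : Subfield (K p)) : Set (K p)) = Set.univ :=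
    Set.eq_univ_of_forall fun c => (mem_bot_iff c).2 (h c)
  have h3 := ncard_bot (p := p)
  rw [hbot, Set.ncard_univ, card_K] at h3
  have := Nat.pow_lt_pow_right (Fact.out : p.Prime).one_lt (show 1 < 3 by norm_num)
  rw [pow_one] at this
  omega

section Det

variable {F : Type*} [Field F]

def det2 (u v : F × F) : F := u.1 * v.2 - u.2 * v.1

lemma exists_smul_eq_of_det2_eq_zero {w v : F × F} (hw : w ≠ 0) (h : det2 w v = 0) :
    ∃ c : F, c • w = v := by
  unfold det2 at h
  by_cases h1 : w.1 = 0
  · have h2 : w.2 ≠ 0 := fun h2 => hw (Prod.ext h1 h2)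
    refine ⟨v.2 / w.2, Prod.ext ?_ ?_⟩
    · have : w.2 * v.1 = 0 := by rw [h1] at h; linear_combination -h
      simp [h1, (mul_eq_zero.1 this).resolve_left h2]
    · simp [h2]
  · refine ⟨v.1 / w.1, Prod.ext ?_ ?_⟩
    · simp [h1]
    · simp only [Prod.smul_snd, smul_eq_mul]
      field_simp
      linear_combination -h

lemma exists_smul_add_smul_eq {v v' : F × F} (hd : det2 v v' ≠ 0) (x : F × F) :
    ∃ a b : F, a • v + b • v' = x := by
  refine ⟨det2 x v' / det2 v v', det2 v x / det2 v v', Prod.ext ?_ ?_⟩ <;>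
  · simp only [Prod.fst_add, Prod.snd_add, Prod.smul_fst, Prod.smul_snd, smul_eq_mul]
    field_simp
    simp only [det2]
    ring

lemma eq_zero_of_smul_add_smul_eq_zero {v v' : F × F} (hd : det2 v v' ≠ 0) {a b : F}
    (h : a • v + b • v' = 0) : a = 0 ∧ b = 0 := by
  have h1 : a * v.1 + b * v'.1 = 0 := congrArg Prod.fst h
  have h2 : a * v.2 + b * v'.2 = 0 := congrArg Prod.snd h
  unfold det2 at hd
  constructor
  · exact (mul_eq_zero.1 (by linear_combination v'.2 * h1 - v'.1 * h2 :
      a * (v.1 * v'.2 - v.2 * v'.1) = 0)).resolve_right hd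
  · exact (mul_eq_zero.1 (by linear_combination v.1 * h2 - v.2 * h1 :
      b * (v.1 * v'.2 - v.2 * v'.1) = 0)).resolve_right hd

end Det

abbrev V (p : ℕ) [Fact p.Prime] := K p × K p

def line (w : V p) : AddSubgroup (V p) := (Submodule.span (K p) {w}).toAddSubgroup

lemma mem_line {w v : V p} : v ∈ line w ↔ ∃ c : K p, c • w = v := Submodule.mem_span_singleton

lemma card_line {w : V p} (hw : w ≠ 0) : Nat.card (line w) = p ^ 3 := by
  rw [← card_K]
  exact Nat.card_congr (LinearEquiv.toSpanNonzeroSingleton (K p) (V p) w hw).toEquiv.symm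

lemma card_V : Nat.card (V p) = p ^ 6 := by
  rw [Nat.card_prod, card_K]; ring

lemma card_addSubgroup_le (U : AddSubgroup (V p)) : Nat.card U ≤ p ^ 6 :=
  card_V (p := p) ▸ U.card_le_card_addGroup

def twist (u v : V p) : K p := u.1 * v.1 ^ p - u.2 * v.2 ^ p

def commForm (u v : V p) : K p := twist u v - twist v u

lemma twist_add_left (u v w : V p) : twist (u + v) w = twist u w + twist v w := by
  simp only [twist, Prod.fst_add, Prod.snd_add]; ring

lemma twist_add_right (u v w : V p) : twist u (v + w) = twist u v + twist u w := by
  simp only [twist, Prod.fst_add, Prod.snd_add, add_pow_char]; ring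

lemma twist_smul_left (c : K p) (u v : V p) : twist (c • u) v = c * twist u v := by
  simp only [twist, Prod.smul_fst, Prod.smul_snd, smul_eq_mul]; ring

lemma twist_smul_right (c : K p) (u v : V p) : twist u (c • v) = c ^ p * twist u v := by
  simp only [twist, Prod.smul_fst, Prod.smul_snd, smul_eq_mul, mul_pow]; ring

lemma twist_neg_left (u v : V p) : twist (-u) v = -twist u v := by
  simp only [twist, Prod.fst_neg, Prod.snd_neg]; ring

lemma commForm_swap (u v : V p) : commForm v u = -commForm u v := by
  simp only [commForm]; ring

lemma commForm_add_right (u v w : V p) : commForm u (v + w) = commForm u v + commForm u w := by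
  simp only [commForm, twist_add_left, twist_add_right]; ring

lemma commForm_smul_left (c : K p) (u v : V p) :
    commForm (c • u) v = c * twist u v - c ^ p * twist v u := by
  simp only [commForm, twist_smul_left, twist_smul_right]

lemma commForm_smul_right (c : K p) (u v : V p) :
    commForm u (c • v) = c ^ p * twist u v - c * twist v u := by
  simp only [commForm, twist_smul_left, twist_smul_right]

lemma commForm_zero_left (v : V p) : commForm 0 v = 0 := by
  simp [commForm, twist, (Fact.out : p.Prime).ne_zero]

lemma commForm_zero_right (u : V p) : commForm u 0 = 0 := by
  rw [commForm_swap, commForm_zero_left, neg_zero]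

def perp (U : AddSubgroup (V p)) : AddSubgroup (V p) where
  carrier := {v | ∀ u ∈ U, commForm u v = 0}
  add_mem' ha hb u hu := by rw [commForm_add_right, ha u hu, hb u hu, add_zero]
  zero_mem' u _ := commForm_zero_right u
  neg_mem' {v} hv u hu := by
    have := commForm_add_right u v (-v)
    rwa [add_neg_cancel, hv u hu, zero_add, commForm_zero_right, eq_comm] at this

lemma mem_perp {U : AddSubgroup (V p)} {v : V p} : v ∈ perp U ↔ ∀ u ∈ U, commForm u v = 0 :=
  Iff.rfl

lemma le_perp_perp (U : AddSubgroup (V p)) : U ≤ perp (perp U) := fun u hu v hv => by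
  rw [commForm_swap, hv u hu, neg_zero]

lemma perp_bot : perp (⊥ : AddSubgroup (V p)) = ⊤ :=
  eq_top_iff.2 fun v _ u hu => by rw [(AddSubgroup.mem_bot).1 hu, commForm_zero_left]

lemma card_ker_mul_card_le {A B C : Type*} [AddGroup A] [AddGroup B] [AddGroup C] [Finite A]
    [Finite C] (φ : A →+ B) (ψ : C →+ A) :
    Nat.card φ.ker * Nat.card C ≤ Nat.card A * Nat.card (φ.comp ψ).ker := by
  have hA := φ.ker.card_mul_index
  have hC := (φ.comp ψ).ker.card_mul_index
  rw [AddSubgroup.index_ker] at hA hC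
  have : Finite φ.range := (Set.finite_range φ).to_subtype
  have hle : Nat.card (φ.comp ψ).range ≤ Nat.card φ.range :=
    AddSubgroup.card_le_of_le (by rintro _ ⟨x, rfl⟩; exact ⟨ψ x, rfl⟩)
  rw [← hA, ← hC]
  calc Nat.card φ.ker * (Nat.card (φ.comp ψ).ker * Nat.card (φ.comp ψ).range)
      = Nat.card (φ.comp ψ).ker * Nat.card φ.ker * Nat.card (φ.comp ψ).range := by ring
    _ ≤ Nat.card (φ.comp ψ).ker * Nat.card φ.ker * Nat.card φ.range := by gcongr
    _ = Nat.card φ.ker * Nat.card φ.range * Nat.card (φ.comp ψ).ker := by ring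

def commHom (u : V p) : V p →+ K p where
  toFun := commForm u
  map_zero' := commForm_zero_right u
  map_add' := commForm_add_right u

lemma card_ker_commHom_le {u : V p} (hu : u ≠ 0) : Nat.card (commHom u).ker ≤ p ^ 4 := by
  have hp := (Fact.out : p.Prime)
  have hroots {a : K p} (ha : a ≠ 0) (ψ : K p →+ V p)
      (hψ : ∀ x ∈ ((commHom u).comp ψ).ker, a * x ^ p = a ^ p * x) :
      Nat.card ((commHom u).comp ψ).ker ≤ p :=
    (Nat.card_coe_set_eq (((commHom u).comp ψ).ker : Set (K p))).le.trans <|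
      (Set.ncard_le_ncard hψ (Set.toFinite _)).trans (ncard_setOf_mul_pow_eq_le hp.one_lt ha _)
  -- on an axis where `u` is nonzero, `commForm u` is `x ↦ ±(a x^p - a^p x)`
  obtain ⟨ψ, hψ⟩ : ∃ ψ : K p →+ V p, Nat.card ((commHom u).comp ψ).ker ≤ p := by
    by_cases h1 : u.1 = 0
    · have h2 : u.2 ≠ 0 := fun h2 => hu (Prod.ext h1 h2)
      refine ⟨AddMonoidHom.inr _ _, hroots h2 _ fun x hx => ?_⟩
      have : commForm u (0, x) = 0 := hx
      simp only [commForm, twist, zero_pow hp.ne_zero] at this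
      linear_combination -this
    · refine ⟨AddMonoidHom.inl _ _, hroots h1 _ fun x hx => ?_⟩
      have : commForm u (x, 0) = 0 := hx
      simp only [commForm, twist, zero_pow hp.ne_zero] at this
      linear_combination this
  have := (card_ker_mul_card_le (commHom u) ψ).trans (Nat.mul_le_mul_left _ hψ)
  rw [card_K, card_V] at this
  exact Nat.le_of_mul_le_mul_right (by linarith) (pow_pos hp.pos 3)

lemma card_perp_le_of_ne_zero {U : AddSubgroup (V p)} {u : V p} (hu : u ∈ U) (hu0 : u ≠ 0) :
    Nat.card (perp U) ≤ p ^ 4 :=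
  (AddSubgroup.card_le_of_le fun v (hv : v ∈ perp U) => hv u hu).trans (card_ker_commHom_le hu0)

lemma commForm_smul_right_of_eq_zero {u v : V p} (h : commForm u v = 0) (c : K p) :
    commForm u (c • v) = (c ^ p - c) * twist u v := by
  rw [commForm, sub_eq_zero] at h
  rw [commForm_smul_right, h]; ring

lemma det2_twist (u₁ u₂ v v' : V p) :
    det2 (twist u₁ v, twist u₂ v) (twist u₁ v', twist u₂ v') = -(det2 u₁ u₂ * det2 v v' ^ p) := by
  simp only [det2, twist, sub_pow_char, mul_pow]; ring

lemma eq_zero_of_twist_eq_zero {u₁ u₂ v : V p} (hd : det2 u₁ u₂ ≠ 0) (h₁ : twist u₁ v = 0)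
    (h₂ : twist u₂ v = 0) : v = 0 := by
  have hd' : det2 (u₁.1, u₂.1) (u₁.2, u₂.2) ≠ 0 := by simpa [det2, mul_comm] using hd
  obtain ⟨h1, h2⟩ := eq_zero_of_smul_add_smul_eq_zero hd' (a := v.1 ^ p) (b := -v.2 ^ p)
    (Prod.ext (by simp [twist] at h₁ ⊢; linear_combination h₁)
      (by simp [twist] at h₂ ⊢; linear_combination h₂))
  have hp := (Fact.out : p.Prime).ne_zero
  exact Prod.ext (pow_eq_zero_iff hp |>.1 h1) (pow_eq_zero_iff hp |>.1 (neg_eq_zero.1 h2))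

lemma pow_eq_self_of_smul_mem_perp {U : AddSubgroup (V p)} {u₁ u₂ : V p} (hu₁ : u₁ ∈ U)
    (hu₂ : u₂ ∈ U) (hd : det2 u₁ u₂ ≠ 0) {v : V p} (hv : v ∈ perp U) (hv0 : v ≠ 0) {c : K p}
    (hc : c • v ∈ perp U) : c ^ p = c := by
  by_contra hcp
  have hcp' : c ^ p - c ≠ 0 := sub_ne_zero.2 hcp
  have key {u : V p} (hu : u ∈ U) : twist u v = 0 := by
    have := hc u hu
    rw [commForm_smul_right_of_eq_zero (hv u hu)] at this
    exact (mul_eq_zero.1 this).resolve_left hcp'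
  exact hv0 (eq_zero_of_twist_eq_zero hd (key hu₁) (key hu₂))

lemma pow_eq_self_of_smul_add_smul_mem_perp {U : AddSubgroup (V p)} {u₁ u₂ : V p} (hu₁ : u₁ ∈ U)
    (hu₂ : u₂ ∈ U) (hd : det2 u₁ u₂ ≠ 0) {v v' : V p} (hv : v ∈ perp U) (hv' : v' ∈ perp U)
    (hdv : det2 v v' ≠ 0) {a b : K p} (h : a • v + b • v' ∈ perp U) : a ^ p = a ∧ b ^ p = b := by
  have key {u : V p} (hu : u ∈ U) : (a ^ p - a) * twist u v + (b ^ p - b) * twist u v' = 0 := by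
    have := h u hu
    rwa [commForm_add_right, commForm_smul_right_of_eq_zero (hv u hu),
      commForm_smul_right_of_eq_zero (hv' u hu)] at this
  have hdet : det2 (twist u₁ v, twist u₂ v) (twist u₁ v', twist u₂ v') ≠ 0 := by
    rw [det2_twist]
    exact neg_ne_zero.2 (mul_ne_zero hd (pow_ne_zero _ hdv))
  obtain ⟨ha, hb⟩ := eq_zero_of_smul_add_smul_eq_zero hdet (a := a ^ p - a) (b := b ^ p - b)
    (Prod.ext (by simpa using key hu₁) (by simpa using key hu₂))
  exact ⟨sub_eq_zero.1 ha, sub_eq_zero.1 hb⟩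

lemma card_eq_ncard (U : AddSubgroup (V p)) : Nat.card U = (U : Set (V p)).ncard :=
  Nat.card_coe_set_eq _

lemma ncard_le_of_forall_eq_smul {w : V p} {s : Set (V p)}
    (h : ∀ x ∈ s, ∃ c : K p, c ^ p = c ∧ c • w = x) : s.ncard ≤ p := by
  have hs : s ⊆ (· • w) '' ((⊥ : Subfield (K p)) : Set (K p)) := fun x hx => by
    obtain ⟨c, hc, rfl⟩ := h x hx
    exact ⟨c, (mem_bot_iff c).2 hc, rfl⟩
  exact (Set.ncard_le_ncard hs (Set.toFinite _)).trans (Set.ncard_image_le (Set.toFinite _))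
    |>.trans ncard_bot.le

lemma ncard_le_of_forall_eq_smul_add_smul {v v' : V p} {s : Set (V p)}
    (h : ∀ x ∈ s, ∃ a b : K p, a ^ p = a ∧ b ^ p = b ∧ a • v + b • v' = x) : s.ncard ≤ p ^ 2 := by
  set Fp := ((⊥ : Subfield (K p)) : Set (K p))
  have hs : s ⊆ (fun ab : K p × K p => ab.1 • v + ab.2 • v') '' Fp ×ˢ Fp := fun x hx => by
    obtain ⟨a, b, ha, hb, rfl⟩ := h x hx
    exact ⟨(a, b), ⟨(mem_bot_iff a).2 ha, (mem_bot_iff b).2 hb⟩, rfl⟩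
  calc s.ncard ≤ (Fp ×ˢ Fp).ncard :=
        (Set.ncard_le_ncard hs (Set.toFinite _)).trans (Set.ncard_image_le (Set.toFinite _))
    _ = p ^ 2 := by rw [Set.ncard_prod, ncard_bot, sq]

lemma eq_bot_or_le_line_or_exists_det2_ne_zero (U : AddSubgroup (V p)) :
    U = ⊥ ∨ (∃ w ∈ U, w ≠ 0 ∧ U ≤ line w) ∨ ∃ u₁ ∈ U, ∃ u₂ ∈ U, det2 u₁ u₂ ≠ 0 := by
  refine (AddSubgroup.bot_or_exists_ne_zero U).imp_right fun ⟨w, hw, hw0⟩ => ?_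
  by_cases h : ∃ u ∈ U, det2 w u ≠ 0
  · exact Or.inr ⟨w, hw, h⟩
  · push Not at h
    exact Or.inl ⟨w, hw, hw0, fun u hu => mem_line.2 (exists_smul_eq_of_det2_eq_zero hw0 (h u hu))⟩

lemma card_perp_le_of_det2_ne_zero {U : AddSubgroup (V p)} {u₁ u₂ : V p} (hu₁ : u₁ ∈ U)
    (hu₂ : u₂ ∈ U) (hd : det2 u₁ u₂ ≠ 0) : Nat.card (perp U) ≤ p ^ 2 := by
  have hp := (Fact.out : p.Prime)
  rw [card_eq_ncard]
  rcases eq_bot_or_le_line_or_exists_det2_ne_zero (perp U) with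
    h | ⟨w, hw, hw0, hle⟩ | ⟨v, hv, v', hv', hdv⟩
  · rw [h, AddSubgroup.coe_bot, Set.ncard_singleton]
    exact Nat.one_le_pow _ _ hp.pos
  · refine (ncard_le_of_forall_eq_smul (w := w) fun x hx => ?_).trans
      (Nat.le_self_pow two_ne_zero p)
    obtain ⟨c, rfl⟩ := mem_line.1 (hle hx)
    exact ⟨c, pow_eq_self_of_smul_mem_perp hu₁ hu₂ hd hw hw0 hx, rfl⟩
  · refine ncard_le_of_forall_eq_smul_add_smul (v := v) (v' := v') fun x hx => ?_
    obtain ⟨a, b, rfl⟩ := exists_smul_add_smul_eq hdv x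
    obtain ⟨ha, hb⟩ := pow_eq_self_of_smul_add_smul_mem_perp hu₁ hu₂ hd hv hv' hdv hx
    exact ⟨a, b, ha, hb, rfl⟩

/-- `w₁ / w₂ ∈ 𝔽_p ∪ {∞}`: the line `K w` is spanned by a vector of `𝔽_p²`. -/
def IsRational (w : V p) : Prop := w.1 ^ p * w.2 = w.1 * w.2 ^ p

def twistOrth (w : V p) : Set (V p) := {v | twist w v = 0 ∧ twist v w = 0}

lemma perp_subset_twistOrth {U : AddSubgroup (V p)} {w : V p} (hw : w ∈ U) {c : K p}
    (hc : c • w ∈ U) (hcp : c ^ p ≠ c) : (perp U : Set (V p)) ⊆ twistOrth w := fun v hv => by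
  have h1 : twist w v = twist v w := sub_eq_zero.1 (hv w hw)
  have h2 := hv _ hc
  rw [commForm_smul_left, h1] at h2
  have : twist v w = 0 := (mul_eq_zero.1 (by linear_combination -h2 :
    (c ^ p - c) * twist v w = 0)).resolve_left (sub_ne_zero.2 hcp)
  exact ⟨h1.trans this, this⟩

lemma ncard_twistOrth_le {w : V p} (hw : w ≠ 0) : (twistOrth w).ncard ≤ p ^ 3 := by
  have hp := (Fact.out : p.Prime).ne_zero
  have hw' : (w.2 ^ p, w.1 ^ p) ≠ 0 := fun h => hw <| Prod.ext
    (pow_eq_zero_iff hp |>.1 (congrArg Prod.snd h)) (pow_eq_zero_iff hp |>.1 (congrArg Prod.fst h))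
  have hsub : twistOrth w ⊆ line (w.2 ^ p, w.1 ^ p) := fun v ⟨_, hv⟩ =>
    mem_line.2 <| exists_smul_eq_of_det2_eq_zero hw' <| by
      simp only [twist] at hv; simp only [det2]; linear_combination -hv
  calc (twistOrth w).ncard ≤ Nat.card (line (w.2 ^ p, w.1 ^ p)) :=
        (Set.ncard_le_ncard hsub (Set.toFinite _)).trans (Nat.card_coe_set_eq _).ge
    _ = p ^ 3 := card_line hw'

lemma twistOrth_subset_zero {w : V p} (hw : ¬IsRational w) : twistOrth w ⊆ {0} := by
  unfold IsRational at hw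
  have hp := (Fact.out : p.Prime).ne_zero
  have hw2 : w.2 ≠ 0 := by rintro h; simp [h, zero_pow hp] at hw
  -- its `p`-th power is `w₁^p w₂ - w₁ w₂^p`, since Frobenius has order 3 on `K p`
  have hkey : w.1 * (w.2 ^ p) ^ p - (w.1 ^ p) ^ p * w.2 ≠ 0 := fun h => hw <| by
    have := congrArg (· ^ p) (sub_eq_zero.1 h)
    simp only [mul_pow, pow_pow_pow_eq_self] at this
    linear_combination this
  rintro v ⟨h1, h2⟩
  simp only [twist] at h1 h2
  have e : (w.2 ^ p * v.2) ^ p = (w.1 ^ p * v.1) ^ p := by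
    rw [show w.2 ^ p * v.2 = w.1 ^ p * v.1 by linear_combination -h2]
  rw [mul_pow, mul_pow] at e
  have hv1 : v.1 = 0 := by
    have hz : v.1 ^ p * (w.1 * (w.2 ^ p) ^ p - (w.1 ^ p) ^ p * w.2) = 0 := by
      linear_combination (w.2 ^ p) ^ p * h1 + w.2 * e
    exact pow_eq_zero_iff hp |>.1 ((mul_eq_zero.1 hz).resolve_right hkey)
  have hv2 : v.2 = 0 := by
    rw [hv1] at h2
    exact (mul_eq_zero.1 (by linear_combination -h2 : w.2 ^ p * v.2 = 0)).resolve_left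
      (pow_ne_zero _ hw2)
  exact Prod.ext hv1 hv2

lemma card_le_or_card_perp_le (U : AddSubgroup (V p)) :
    Nat.card U ≤ p ∨ Nat.card (perp U) ≤ p ^ 3 := by
  have hp := (Fact.out : p.Prime)
  rcases eq_bot_or_le_line_or_exists_det2_ne_zero U with
    rfl | ⟨w, hw, hw0, hle⟩ | ⟨u₁, hu₁, u₂, hu₂, hd⟩
  · exact Or.inl (by rw [AddSubgroup.card_bot]; exact hp.one_lt.le)
  · by_cases hfix : ∀ u ∈ U, ∃ c : K p, c ^ p = c ∧ c • w = u
    · exact Or.inl ((card_eq_ncard U).trans_le (ncard_le_of_forall_eq_smul hfix))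
    · push Not at hfix
      obtain ⟨u, hu, hnot⟩ := hfix
      obtain ⟨c, rfl⟩ := mem_line.1 (hle hu)
      refine Or.inr ((card_eq_ncard _).trans_le ?_)
      exact (Set.ncard_le_ncard (perp_subset_twistOrth hw hu fun h => hnot c h rfl)
        (Set.toFinite _)).trans (ncard_twistOrth_le hw0)
  · exact Or.inr ((card_perp_le_of_det2_ne_zero hu₁ hu₂ hd).trans
      (Nat.pow_le_pow_right hp.pos (by norm_num)))

lemma card_mul_card_perp_lt_or_le (U : AddSubgroup (V p)) (hU : U ≠ ⊥) (hW : perp U ≠ ⊥) :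
    Nat.card U * Nat.card (perp U) < p ^ 6 ∨
      Nat.card U ≤ p ^ 3 ∧ Nat.card (perp U) ≤ p ^ 3 := by
  have hp := (Fact.out : p.Prime)
  obtain ⟨u, hu, hu0⟩ := (AddSubgroup.bot_or_exists_ne_zero U).resolve_left hU
  obtain ⟨v, hv, hv0⟩ := (AddSubgroup.bot_or_exists_ne_zero (perp U)).resolve_left hW
  have hUW : Nat.card U ≤ Nat.card (perp (perp U)) := AddSubgroup.card_le_of_le (le_perp_perp U)
  have hW4 := card_perp_le_of_ne_zero hu hu0
  have hU4 := hUW.trans (card_perp_le_of_ne_zero hv hv0)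
  have h56 : p ^ 5 < p ^ 6 := Nat.pow_lt_pow_right hp.one_lt (by norm_num)
  rcases card_le_or_card_perp_le U with h1 | h1
  · exact Or.inl <| lt_of_le_of_lt (by simpa [pow_succ'] using Nat.mul_le_mul h1 hW4) h56
  rcases card_le_or_card_perp_le (perp U) with h2 | h2
  · exact Or.inl <| lt_of_le_of_lt (by simpa [pow_succ] using Nat.mul_le_mul hU4 h2) h56
  · exact Or.inr ⟨hUW.trans h2, h1⟩

theorem card_mul_card_perp_le (U : AddSubgroup (V p)) : Nat.card U * Nat.card (perp U) ≤ p ^ 6 := by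
  rcases eq_or_ne U ⊥ with rfl | hU
  · rw [perp_bot, AddSubgroup.card_bot, AddSubgroup.card_top, card_V, one_mul]
  rcases eq_or_ne (perp U) ⊥ with hW | hW
  · rw [hW, AddSubgroup.card_bot, mul_one]
    exact card_addSubgroup_le U
  rcases card_mul_card_perp_lt_or_le U hU hW with h | ⟨h1, h2⟩
  · exact h.le
  · exact (Nat.mul_le_mul h1 h2).trans_eq (by ring)

theorem eq_bot_or_eq_top_or_card_eq (U : AddSubgroup (V p))
    (h : Nat.card U * Nat.card (perp U) = p ^ 6) :
    U = ⊥ ∨ U = ⊤ ∨ Nat.card U = p ^ 3 ∧ Nat.card (perp U) = p ^ 3 := by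
  rcases eq_or_ne U ⊥ with hU | hU
  · exact Or.inl hU
  rcases eq_or_ne (perp U) ⊥ with hW | hW
  · rw [hW, AddSubgroup.card_bot, mul_one, ← card_V] at h
    exact Or.inr (Or.inl (AddSubgroup.eq_top_of_card_eq U h))
  rcases card_mul_card_perp_lt_or_le U hU hW with hlt | ⟨h1, h2⟩
  · exact absurd h hlt.ne
  · have hpos : 0 < p ^ 3 := pow_pos (Fact.out : p.Prime).pos 3
    refine Or.inr (Or.inr ⟨?_, ?_⟩) <;> nlinarith

theorem exists_eq_line_of_card_eq {U : AddSubgroup (V p)} (h1 : Nat.card U = p ^ 3)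
    (h2 : Nat.card (perp U) = p ^ 3) :
    ∃ w : V p, w ≠ 0 ∧ IsRational w ∧ U = line w := by
  have hp := (Fact.out : p.Prime)
  rcases eq_bot_or_le_line_or_exists_det2_ne_zero U with
    rfl | ⟨w, hw, hw0, hle⟩ | ⟨u₁, hu₁, u₂, hu₂, hd⟩
  · rw [AddSubgroup.card_bot] at h1
    exact absurd h1 (Nat.one_lt_pow (by norm_num) hp.one_lt).ne
  · have hU : U = line w :=
      AddSubgroup.eq_of_le_of_card_ge hle (by rw [card_line hw0, h1])
    refine ⟨w, hw0, by_contra fun hR => ?_, hU⟩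
    obtain ⟨τ, hτ⟩ := exists_pow_ne_self (p := p)
    have hτw : τ • w ∈ U := hU ▸ mem_line.2 ⟨τ, rfl⟩
    have := (Set.ncard_le_ncard ((perp_subset_twistOrth hw hτw hτ).trans
      (twistOrth_subset_zero hR))).trans_eq (Set.ncard_singleton _)
    rw [← card_eq_ncard, h2] at this
    exact (Nat.one_lt_pow (by norm_num) hp.one_lt).not_ge this
  · have := card_perp_le_of_det2_ne_zero hu₁ hu₂ hd
    rw [h2] at this
    exact absurd this (Nat.pow_lt_pow_right hp.one_lt (by norm_num)).not_ge

/-- `Option 𝔽_p` is the projective line `ℙ¹(𝔽_p)`, so `ratLine` runs over the rational lines. -/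
def ratDir : Option (⊥ : Subfield (K p)) → V p
  | none => (1, 0)
  | some n => (n, 1)

def ratLine (o : Option (⊥ : Subfield (K p))) : AddSubgroup (V p) := line (ratDir o)

lemma ratDir_ne_zero (o : Option (⊥ : Subfield (K p))) : ratDir o ≠ 0 := by
  cases o <;> simp [ratDir]

lemma ratDir_pow (o : Option (⊥ : Subfield (K p))) :
    (ratDir o).1 ^ p = (ratDir o).1 ∧ (ratDir o).2 ^ p = (ratDir o).2 := by
  cases o with
  | none => simp [ratDir, (Fact.out : p.Prime).ne_zero]
  | some n => exact ⟨(mem_bot_iff _).1 n.2, one_pow p⟩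

lemma card_ratLine (o : Option (⊥ : Subfield (K p))) : Nat.card (ratLine o) = p ^ 3 :=
  card_line (ratDir_ne_zero o)

lemma line_smul {c : K p} (hc : c ≠ 0) (w : V p) : line (c • w) = line w := by
  rw [line, Submodule.span_singleton_smul_eq hc.isUnit, line]

lemma exists_line_eq_ratLine {w : V p} (hw : w ≠ 0) (hR : IsRational w) :
    ∃ o, line w = ratLine o := by
  by_cases hw2 : w.2 = 0
  · have hw1 : w.1 ≠ 0 := fun h => hw (Prod.ext h hw2)
    refine ⟨none, ?_⟩
    rw [ratLine, ← line_smul hw1 (ratDir none)]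
    congr 1
    ext <;> simp [ratDir, hw2]
  · have hn : (w.1 / w.2) ^ p = w.1 / w.2 := by
      rw [div_pow, div_eq_div_iff (pow_ne_zero _ hw2) hw2]
      exact hR
    refine ⟨some ⟨w.1 / w.2, (mem_bot_iff _).2 hn⟩, ?_⟩
    rw [ratLine, ← line_smul hw2 (ratDir _)]
    congr 1
    ext
    · simp [ratDir, mul_div_cancel₀ _ hw2]
    · simp [ratDir]

lemma eq_of_ratLine_le {o o' : Option (⊥ : Subfield (K p))} (h : ratLine o ≤ ratLine o') :
    o = o' := by
  obtain ⟨c, hc⟩ := mem_line.1 (h (mem_line.2 ⟨1, one_smul _ _⟩))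
  rcases o with _ | n <;> rcases o' with _ | n' <;>
    simp only [ratDir, Prod.ext_iff, Prod.smul_fst, Prod.smul_snd, smul_eq_mul] at hc
  · rfl
  · obtain ⟨h1, h2⟩ := hc
    rw [mul_one] at h2
    rw [h2, zero_mul] at h1
    exact absurd h1 zero_ne_one
  · simp at hc
  · simp only [mul_one] at hc
    rw [hc.2, one_mul] at hc
    exact congrArg some (Subtype.ext hc.1.symm)

lemma line_swap_le_perp_ratLine (o : Option (⊥ : Subfield (K p))) :
    line (ratDir o).swap ≤ perp (ratLine o) := by
  intro v hv u hu
  obtain ⟨b, rfl⟩ := mem_line.1 hv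
  obtain ⟨a, rfl⟩ := mem_line.1 hu
  obtain ⟨h1, h2⟩ := ratDir_pow o
  simp only [commForm, twist, Prod.smul_fst, Prod.smul_snd, Prod.fst_swap, Prod.snd_swap,
    smul_eq_mul, mul_pow, h1, h2]
  ring

lemma card_perp_ratLine (o : Option (⊥ : Subfield (K p))) :
    Nat.card (perp (ratLine o)) = p ^ 3 := by
  have hp := (Fact.out : p.Prime).pos
  have hle := card_mul_card_perp_le (ratLine o)
  rw [card_ratLine] at hle
  refine le_antisymm (Nat.le_of_mul_le_mul_left (by linarith) (pow_pos hp 3)) ?_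
  have hsw : (ratDir o).swap ≠ 0 := fun h => ratDir_ne_zero o (Prod.swap_injective (by simpa))
  exact (card_line hsw).ge.trans (AddSubgroup.card_le_of_le (line_swap_le_perp_ratLine o))

lemma perp_top : perp (⊤ : AddSubgroup (V p)) = ⊥ := by
  have h := card_mul_card_perp_le (⊤ : AddSubgroup (V p))
  rw [AddSubgroup.card_top, card_V] at h
  exact (AddSubgroup.card_le_one_iff_eq_bot _).1
    (Nat.le_of_mul_le_mul_left (by linarith) (pow_pos (Fact.out : p.Prime).pos 6))

theorem card_mul_card_perp_eq_iff (U : AddSubgroup (V p)) :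
    Nat.card U * Nat.card (perp U) = p ^ 6 ↔ U = ⊥ ∨ U = ⊤ ∨ ∃ o, U = ratLine o := by
  constructor
  · intro h
    refine (eq_bot_or_eq_top_or_card_eq U h).imp_right (Or.imp_right fun ⟨h1, h2⟩ => ?_)
    obtain ⟨w, hw, hR, rfl⟩ := exists_eq_line_of_card_eq h1 h2
    exact exists_line_eq_ratLine hw hR
  · rintro (rfl | rfl | ⟨o, rfl⟩)
    · rw [perp_bot, AddSubgroup.card_bot, AddSubgroup.card_top, card_V, one_mul]
    · rw [perp_top, AddSubgroup.card_bot, AddSubgroup.card_top, card_V, mul_one]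
    · rw [card_ratLine, card_perp_ratLine, ← pow_add]

lemma commForm_smul_smul (a b : K p) (w : V p) :
    commForm (a • w) (b • w) = (a * b ^ p - a ^ p * b) * twist w w := by
  rw [commForm_smul_left, twist_smul_right, twist_smul_left]; ring

lemma forall_commForm_line_eq_zero_iff (w : V p) :
    (∀ u ∈ line w, ∀ v ∈ line w, commForm u v = 0) ↔ twist w w = 0 := by
  constructor
  · intro h
    obtain ⟨τ, hτ⟩ := exists_pow_ne_self (p := p)
    have := h _ (mem_line.2 ⟨1, rfl⟩) _ (mem_line.2 ⟨τ, rfl⟩)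
    rw [commForm_smul_smul, one_pow, one_mul, one_mul] at this
    exact (mul_eq_zero.1 this).resolve_left (sub_ne_zero.2 hτ)
  · intro h u hu v hv
    obtain ⟨a, rfl⟩ := mem_line.1 hu
    obtain ⟨b, rfl⟩ := mem_line.1 hv
    rw [commForm_smul_smul, h, mul_zero]

lemma twist_ratDir_self_eq_zero_iff (o : Option (⊥ : Subfield (K p))) :
    twist (ratDir o) (ratDir o) = 0 ↔ o = some 1 ∨ o = some (-1) := by
  cases o with
  | none => simp [ratDir, twist, (Fact.out : p.Prime).ne_zero]
  | some n =>
    have hn : (n : K p) ^ p = n := (mem_bot_iff _).1 n.2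
    simp only [ratDir, twist, hn, one_pow, mul_one, Option.some.injEq, Subtype.ext_iff]
    rw [← sq, sub_eq_zero, sq_eq_one_iff]
    simp

@[ext]
structure Y (p : ℕ) [Fact p.Prime] where
  v : V p
  z : K p

instance : Mul (Y p) := ⟨fun g h => ⟨g.v + h.v, g.z + h.z + twist g.v h.v⟩⟩
instance : One (Y p) := ⟨⟨0, 0⟩⟩
instance : Inv (Y p) := ⟨fun g => ⟨-g.v, -g.z + twist g.v g.v⟩⟩

@[simp] lemma Y.mul_v (g h : Y p) : (g * h).v = g.v + h.v := rfl
@[simp] lemma Y.mul_z (g h : Y p) : (g * h).z = g.z + h.z + twist g.v h.v := rfl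
@[simp] lemma Y.one_v : (1 : Y p).v = 0 := rfl
@[simp] lemma Y.one_z : (1 : Y p).z = 0 := rfl
@[simp] lemma Y.inv_v (g : Y p) : g⁻¹.v = -g.v := rfl
@[simp] lemma Y.inv_z (g : Y p) : g⁻¹.z = -g.z + twist g.v g.v := rfl

instance : Group (Y p) where
  mul_assoc a b c := Y.ext (add_assoc _ _ _) <| by
    simp only [Y.mul_v, Y.mul_z, twist_add_left, twist_add_right]; ring
  one_mul a := Y.ext (zero_add _) <| by simp [twist]
  mul_one a := Y.ext (add_zero _) <| by simp [twist, (Fact.out : p.Prime).ne_zero]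
  inv_mul_cancel a := Y.ext (neg_add_cancel _) <| by
    simp only [Y.mul_z, Y.inv_v, Y.inv_z, Y.one_z, twist_neg_left]; ring

lemma Y.mul_comm_iff (g h : Y p) : g * h = h * g ↔ commForm g.v h.v = 0 := by
  simp only [Y.ext_iff, Y.mul_v, Y.mul_z, add_comm g.v, true_and, commForm]
  constructor <;> intro h <;> linear_combination h

def Y.equivProd : Y p ≃ V p × K p where
  toFun g := (g.v, g.z)
  invFun x := ⟨x.1, x.2⟩
  left_inv _ := rfl
  right_inv _ := rfl

instance : Finite (Y p) := Finite.of_equiv _ Y.equivProd.symm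

lemma card_Y : Nat.card (Y p) = p ^ 9 := by
  rw [Nat.card_congr Y.equivProd, Nat.card_prod, card_V, card_K]; ring

def lift (U : AddSubgroup (V p)) : Subgroup (Y p) where
  carrier := {g | g.v ∈ U}
  mul_mem' ha hb := U.add_mem ha hb
  one_mem' := U.zero_mem
  inv_mem' ha := U.neg_mem ha

def proj (H : Subgroup (Y p)) : AddSubgroup (V p) where
  carrier := Y.v '' H
  add_mem' := by
    rintro _ _ ⟨g, hg, rfl⟩ ⟨h, hh, rfl⟩
    exact ⟨g * h, H.mul_mem hg hh, rfl⟩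
  zero_mem' := ⟨1, H.one_mem, rfl⟩
  neg_mem' := by
    rintro _ ⟨g, hg, rfl⟩
    exact ⟨g⁻¹, H.inv_mem hg, rfl⟩

lemma mem_lift {U : AddSubgroup (V p)} {g : Y p} : g ∈ lift U ↔ g.v ∈ U := Iff.rfl

lemma card_lift (U : AddSubgroup (V p)) : Nat.card (lift U) = Nat.card U * p ^ 3 := by
  rw [← card_K, ← Nat.card_prod]
  exact Nat.card_congr
    { toFun := fun g => (⟨g.1.v, g.2⟩, g.1.z)
      invFun := fun x => ⟨⟨x.1.1, x.2⟩, x.1.2⟩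
      left_inv := fun _ => rfl
      right_inv := fun _ => rfl }

lemma lift_le_lift_iff {U U' : AddSubgroup (V p)} : lift U ≤ lift U' ↔ U ≤ U' :=
  ⟨fun h u hu => mem_lift.1 (h (show (⟨u, 0⟩ : Y p) ∈ lift U from hu)), fun h _ hg => h hg⟩

lemma lift_lt_lift_iff {U U' : AddSubgroup (V p)} : lift U < lift U' ↔ U < U' := by
  simp only [lt_iff_le_not_ge, lift_le_lift_iff]

lemma lift_injective : Function.Injective (lift (p := p)) := fun _ _ h =>
  le_antisymm (lift_le_lift_iff.1 h.le) (lift_le_lift_iff.1 h.ge)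

lemma lift_top : lift (⊤ : AddSubgroup (V p)) = ⊤ := eq_top_iff.2 fun _ _ => trivial

lemma le_lift_proj (H : Subgroup (Y p)) : H ≤ lift (proj H) := fun g hg => ⟨g, hg, rfl⟩

lemma proj_lift (U : AddSubgroup (V p)) : proj (lift U) = U := by
  ext u
  exact ⟨fun ⟨g, hg, hgu⟩ => hgu ▸ hg, fun hu => ⟨⟨u, 0⟩, hu, rfl⟩⟩

lemma centralizer_eq_lift_perp (H : Subgroup (Y p)) :
    Subgroup.centralizer (H : Set (Y p)) = lift (perp (proj H)) := by
  ext g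
  rw [Subgroup.mem_centralizer_iff, mem_lift, mem_perp]
  constructor
  · rintro h _ ⟨k, hk, rfl⟩
    exact (Y.mul_comm_iff k g).1 (h k hk)
  · exact fun h k hk => (Y.mul_comm_iff k g).2 (h _ ⟨k, hk, rfl⟩)

lemma center_eq_lift_bot : Subgroup.center (Y p) = lift ⊥ := by
  rw [← Subgroup.centralizer_univ, ← Subgroup.coe_top, centralizer_eq_lift_perp, ← lift_top,
    proj_lift, perp_top]

lemma CDmeasure_eq (H : Subgroup (Y p)) :
    CDmeasure H = Nat.card H * (Nat.card (perp (proj H)) * p ^ 3) := by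
  rw [CDmeasure, centralizer_eq_lift_perp, card_lift]

lemma CDmeasure_lift (U : AddSubgroup (V p)) :
    CDmeasure (lift U) = Nat.card U * Nat.card (perp U) * p ^ 6 := by
  rw [CDmeasure_eq, proj_lift, card_lift]; ring

lemma CDmeasure_le_CDmeasure_lift_proj (H : Subgroup (Y p)) :
    CDmeasure H ≤ CDmeasure (lift (proj H)) := by
  rw [CDmeasure_eq, CDmeasure_eq, proj_lift]
  exact Nat.mul_le_mul_right _ (Subgroup.card_le_of_le (le_lift_proj H))

lemma CDmeasure_le (H : Subgroup (Y p)) : CDmeasure H ≤ p ^ 12 :=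
  (CDmeasure_le_CDmeasure_lift_proj H).trans <| by
    rw [CDmeasure_lift, show p ^ 12 = p ^ 6 * p ^ 6 by ring]
    exact Nat.mul_le_mul_right _ (card_mul_card_perp_le _)

lemma CDmeasure_lift_eq_iff (U : AddSubgroup (V p)) :
    CDmeasure (lift U) = p ^ 12 ↔ U = ⊥ ∨ U = ⊤ ∨ ∃ o, U = ratLine o := by
  rw [← card_mul_card_perp_eq_iff, CDmeasure_lift, show p ^ 12 = p ^ 6 * p ^ 6 by ring]
  exact Nat.mul_left_inj (pow_ne_zero _ (Fact.out : p.Prime).ne_zero)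

lemma eq_lift_proj_of_CDmeasure_eq {H : Subgroup (Y p)} (h : CDmeasure H = p ^ 12) :
    H = lift (proj H) := by
  refine Subgroup.eq_of_le_of_card_ge (le_lift_proj H) (Nat.le_of_not_lt fun hlt => ?_)
  have hpos : 0 < Nat.card (perp (proj H)) * p ^ 3 :=
    Nat.mul_pos Nat.card_pos (pow_pos (Fact.out : p.Prime).pos 3)
  have hlt' : CDmeasure H < CDmeasure (lift (proj H)) := by
    rw [CDmeasure_eq, CDmeasure_eq, proj_lift]
    exact Nat.mul_lt_mul_of_pos_right hlt hpos
  exact (h ▸ hlt').not_ge (CDmeasure_le _)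

theorem inCD_iff (H : Subgroup (Y p)) :
    inCD H ↔ H = lift ⊥ ∨ H = lift ⊤ ∨ ∃ o, H = lift (ratLine o) := by
  have htop : CDmeasure (⊤ : Subgroup (Y p)) = p ^ 12 := by
    rw [← lift_top, CDmeasure_lift_eq_iff]; exact Or.inr (Or.inl rfl)
  have hCD : inCD H ↔ CDmeasure H = p ^ 12 :=
    ⟨fun h => le_antisymm (CDmeasure_le H) (htop ▸ h ⊤), fun h K => h ▸ CDmeasure_le K⟩
  rw [hCD]
  constructor
  · intro h
    have hH := eq_lift_proj_of_CDmeasure_eq h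
    rcases (CDmeasure_lift_eq_iff _).1 (hH ▸ h) with hU | hU | ⟨o, hU⟩ <;> rw [hH, hU]
    exacts [Or.inl rfl, Or.inr (Or.inl rfl), Or.inr (Or.inr ⟨o, rfl⟩)]
  · rintro (rfl | rfl | ⟨o, rfl⟩) <;> rw [CDmeasure_lift_eq_iff]
    exacts [Or.inl rfl, Or.inr (Or.inl rfl), Or.inr (Or.inr ⟨o, rfl⟩)]

lemma atoms_eq :
    {H : Subgroup (Y p) | inCD H ∧ Subgroup.center (Y p) < H ∧ H < ⊤} =
      Set.range (lift ∘ ratLine) := by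
  have hp := (Fact.out : p.Prime)
  ext H
  rw [center_eq_lift_bot, ← lift_top]
  constructor
  · rintro ⟨hH, hZ, hT⟩
    rcases (inCD_iff H).1 hH with rfl | rfl | ⟨o, rfl⟩
    exacts [absurd hZ (lt_irrefl _), absurd hT (lt_irrefl _), ⟨o, rfl⟩]
  · rintro ⟨o, rfl⟩
    refine ⟨(inCD_iff _).2 (Or.inr (Or.inr ⟨o, rfl⟩)), lift_lt_lift_iff.2 ?_,
      lift_lt_lift_iff.2 ?_⟩
    · refine bot_lt_iff_ne_bot.2 fun h => ?_
      have := card_ratLine o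
      rw [h, AddSubgroup.card_bot] at this
      exact (Nat.one_lt_pow (by norm_num) hp.one_lt).ne this
    · refine lt_top_iff_ne_top.2 fun h => ?_
      have := card_ratLine o
      rw [h, AddSubgroup.card_top, card_V] at this
      exact (Nat.pow_lt_pow_right hp.one_lt (by norm_num : 3 < 6)).ne' this

lemma forall_mul_comm_lift_iff (U : AddSubgroup (V p)) :
    (∀ x y : lift U, x * y = y * x) ↔ ∀ u ∈ U, ∀ v ∈ U, commForm u v = 0 := by
  constructor
  · intro h u hu v hv
    exact (Y.mul_comm_iff ⟨u, 0⟩ ⟨v, 0⟩).1 (congrArg Subtype.val (h ⟨_, hu⟩ ⟨_, hv⟩))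
  · exact fun h x y => Subtype.ext ((Y.mul_comm_iff _ _).2 (h _ x.2 _ y.2))

lemma abelian_atoms_eq :
    {H : Subgroup (Y p) | inCD H ∧ Subgroup.center (Y p) < H ∧ H < ⊤ ∧
      ∀ x y : H, x * y = y * x} = {lift (ratLine (some 1)), lift (ratLine (some (-1)))} := by
  have hab (o : Option (⊥ : Subfield (K p))) :
      (∀ x y : lift (ratLine o), x * y = y * x) ↔ o = some 1 ∨ o = some (-1) := by
    rw [forall_mul_comm_lift_iff, ratLine, forall_commForm_line_eq_zero_iff,
      twist_ratDir_self_eq_zero_iff]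
  ext H
  have hatom := Set.ext_iff.1 (atoms_eq (p := p)) H
  constructor
  · rintro ⟨hH, hZH, hHT, h⟩
    obtain ⟨o, rfl⟩ := hatom.1 ⟨hH, hZH, hHT⟩
    rcases (hab o).1 h with rfl | rfl
    exacts [Or.inl rfl, Or.inr rfl]
  · rintro (rfl | rfl) <;> obtain ⟨hH, hZH, hHT⟩ := hatom.2 ⟨_, rfl⟩
    exacts [⟨hH, hZH, hHT, (hab _).2 (Or.inl rfl)⟩, ⟨hH, hZH, hHT, (hab _).2 (Or.inr rfl)⟩]

lemma neg_one_eq_one_iff_eq_two : (-1 : (⊥ : Subfield (K p))) = 1 ↔ p = 2 := by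
  rw [Subtype.ext_iff, Subfield.coe_neg, Subfield.coe_one, neg_one_eq_one_iff, ringChar.eq (K p) p]

theorem goodCDwidthPplus1'_Y : GoodCDwidthPplus1' (Y p) p := by
  have hZ := center_eq_lift_bot (p := p)
  have hinj : Function.Injective (lift ∘ ratLine (p := p)) := fun o o' h =>
    eq_of_ratLine_le (lift_injective h).le
  refine ⟨card_Y, (inCD_iff ⊤).2 (Or.inr (Or.inl lift_top.symm)), (inCD_iff _).2 (Or.inl hZ),
    ?_, ?_, ?_, ?_, ?_⟩
  · intro H hH
    rcases (inCD_iff H).1 hH with h | h | ⟨o, h⟩ <;>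
      rw [hZ, h] <;> exact lift_le_lift_iff.2 bot_le
  · intro H H' hH hH' hZH hle hH'T
    obtain ⟨o, rfl⟩ : H ∈ Set.range (lift ∘ ratLine) :=
      atoms_eq (p := p) ▸ ⟨hH, hZH, hle.trans_lt hH'T⟩
    obtain ⟨o', rfl⟩ : H' ∈ Set.range (lift ∘ ratLine) :=
      atoms_eq (p := p) ▸ ⟨hH', hZH.trans_le hle, hH'T⟩
    rw [eq_of_ratLine_le (lift_le_lift_iff.1 hle)]
  · rw [atoms_eq, Set.ncard_range_of_injective hinj, Finite.card_option, Subfield.card_bot]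
  · intro hp2
    rw [abelian_atoms_eq, neg_one_eq_one_iff_eq_two.2 hp2, Set.pair_eq_singleton,
      Set.ncard_singleton]
  · intro hodd
    rw [abelian_atoms_eq]
    refine Set.ncard_pair fun h => ?_
    have h2 := neg_one_eq_one_iff_eq_two.1 (Option.some_injective _ (hinj h)).symm
    exact (Nat.not_even_iff_odd.2 hodd) (h2 ▸ even_two)

end ChermakDelgadoExample

/-- for every prime `p` there is a finite group `Y` of order `p^9`
such that `CD(Y)` is a quasi-antichain of width `p + 1` with `Y ∈ CD(Y)`, where
exactly one of the three atoms is abelian if `p = 2`, and exactly two of the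
`p + 1` atoms are abelian if `p` is odd. -/
theorem stmt19 (p : ℕ) (hp : p.Prime) :
    ∃ (Y : Type) (grp : Group Y) (fin : Finite Y),
      @GoodCDwidthPplus1' Y grp fin p := by
  have : Fact p.Prime := ⟨hp⟩
  exact ⟨ChermakDelgadoExample.Y p, inferInstance, inferInstance,
    ChermakDelgadoExample.goodCDwidthPplus1'_Y⟩
end
end
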